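/- Let k ∈ ℕ, k ≥ 1. Then sup_{t ∈ (0,∞)} ∫_0^π |∂_θ^k φ_t(θ)| θ^{k-1} dθ < ∞. -/

import Mathlib

/-!
Every θ-derivative of `φ_t` of order `k ≥ 1` is a finite sum of terms
`c tʲ sinᵐθ cosᵇθ φ_t(θ)` with `j ≥ 1` and `2j ≤ m + k`: differentiating such a term lowers `m`
by at most one, and when the derivative falls on `φ_t` it raises `j` and `m` together.
Since `|sin θ| ≤ θ` and, by Jordan's inequality, `φ_t(θ) ≤ exp(-2u)` with `u = 2tθ²/π²`,
the constraint `2j ≤ m + k` bounds each term times `θ^(k-1)` by a constant times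
`tθ · (tθ²)^(j-1) · exp(-2u)`, and `u^(j-1) exp(-2u) ≤ (j-1)! exp(-u)`. What remains,
`tθ exp(-u)`, has integral over `[0, π]` at most `π²/4`, whatever `t` is.
-/

open MeasureTheory Set
open scoped ENNReal NNReal Real

noncomputable section

/-- `φ_t(θ) = exp(-2t(1 - cos θ))`. -/
def phi (t θ : ℝ) : ℝ := Real.exp (-2 * t * (1 - Real.cos θ))

/-- `h_k(θ) = sin θ` if `k` is odd, `cos θ` if `k` is even. -/
def hfun (k : ℕ) (x : ℝ) : ℝ := if Odd k then Real.sin x else Real.cos x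

/-- `G(n,t) = (1/π) ∫_0^π exp(-2t(1-cos θ)) cos(nθ) dθ`. -/
def Gker (n : ℤ) (t : ℝ) : ℝ :=
  (1 / Real.pi) * ∫ θ in (0:ℝ)..Real.pi, phi t θ * Real.cos ((n : ℝ) * θ)

/-- `H_k(z,t) = z^{-k} ∫_0^π ∂_θ^k φ_t(θ) h_k(zθ) dθ`. -/
def Hker (k : ℕ) (z t : ℝ) : ℝ :=
  (1 / z ^ k) * ∫ θ in (0:ℝ)..Real.pi, iteratedDeriv k (phi t) θ * hfun k (z * θ)

/-- Kernel of the Laplace-transform-type multiplier: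
`K_Ψ(n) = -∫_0^∞ Ψ(t) ∂_t G(n,t) dt`. -/
def Kker (Ψ : ℝ → ℂ) (n : ℤ) : ℂ :=
  -∫ t in Set.Ioi (0:ℝ), Ψ t * ((deriv (fun s => Gker n s) t : ℝ) : ℂ)

/-- The ball `B_ℤ(n₀, r₀) = {n ∈ ℤ : |n - n₀| ≤ r₀}`. -/
def zball (n₀ : ℤ) (r₀ : ℝ) : Set ℤ := {n : ℤ | |(n : ℝ) - (n₀ : ℝ)| ≤ r₀}

/-- `b : ℤ → ℂ` is an `(H,p,2)`-atom: supported in a ball `B = B_ℤ(n₀,r₀)` with `r₀ ≥ 1`,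
`ℓ²`-norm at most `(#B)^{1/2-1/p}`, and vanishing moments up to order `1/p - 1`. -/
def IsHAtom (p : ℝ) (b : ℤ → ℂ) : Prop :=
  ∃ (n₀ : ℤ) (r₀ : ℝ), 1 ≤ r₀ ∧
    (∀ n : ℤ, b n ≠ 0 → n ∈ zball n₀ r₀) ∧
    Real.sqrt (∑' n : ℤ, ‖b n‖ ^ 2) ≤ ((zball n₀ r₀).ncard : ℝ) ^ ((1:ℝ)/2 - 1/p) ∧
    (∀ α : ℕ, (α : ℝ) ≤ 1/p - 1 → ∑' n : ℤ, (n : ℂ) ^ α * b n = 0)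

open Real
open scoped Nat

lemma pow_mul_exp_neg_two_mul_le {u : ℝ} (hu : 0 ≤ u) (n : ℕ) :
    u ^ n * exp (-(2 * u)) ≤ n ! * exp (-u) := by
  have h := pow_div_factorial_le_exp u hu n
  rw [div_le_iff₀ (by positivity)] at h
  calc u ^ n * exp (-(2 * u)) ≤ exp u * n ! * exp (-(2 * u)) := by gcongr
    _ = n ! * exp (-u) := by rw [show -u = u + -(2 * u) by ring, exp_add]; ring

lemma pow_mul_pow_mul_exp_neg_le {a t θ : ℝ} (ha : 0 < a) (ht : 0 ≤ t) (hθ : 0 ≤ θ) (n : ℕ) :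
    t ^ (n + 1) * θ ^ (2 * n + 1) * exp (-(2 * (a * t * θ ^ 2)))
      ≤ n ! / a ^ n * (t * θ * exp (-(a * t * θ ^ 2))) := by
  have hu := pow_mul_exp_neg_two_mul_le (u := a * t * θ ^ 2) (by positivity) n
  calc t ^ (n + 1) * θ ^ (2 * n + 1) * exp (-(2 * (a * t * θ ^ 2)))
      = t * θ / a ^ n * ((a * t * θ ^ 2) ^ n * exp (-(2 * (a * t * θ ^ 2)))) := by
        field_simp; ring
    _ ≤ t * θ / a ^ n * (n ! * exp (-(a * t * θ ^ 2))) := by gcongr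
    _ = n ! / a ^ n * (t * θ * exp (-(a * t * θ ^ 2))) := by ring

lemma pow_le_pow_sub_mul_pow {x y : ℝ} (hx : 0 ≤ x) (hxy : x ≤ y) {a b : ℕ} (hba : b ≤ a) :
    x ^ a ≤ y ^ (a - b) * x ^ b := by
  calc x ^ a = x ^ (a - b) * x ^ b := by rw [← pow_add, Nat.sub_add_cancel hba]
    _ ≤ y ^ (a - b) * x ^ b := by gcongr

lemma intervalIntegral_mul_exp_neg_mul_sq_le {a : ℝ} (ha : 0 < a) (t L : ℝ) :
    ∫ θ in (0 : ℝ)..L, t * θ * exp (-(a * t * θ ^ 2)) ≤ 1 / (2 * a) := by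
  have hF : ∀ θ ∈ uIcc 0 L, HasDerivAt (fun θ => -(1 / (2 * a)) * exp (-(a * t * θ ^ 2)))
      (t * θ * exp (-(a * t * θ ^ 2))) θ := fun θ _ =>
    (((hasDerivAt_pow 2 θ).const_mul (a * t)).fun_neg.exp.const_mul (-(1 / (2 * a)))).congr_deriv
      (by field_simp; ring)
  rw [intervalIntegral.integral_eq_sub_of_hasDerivAt hF
    (Continuous.intervalIntegrable (by fun_prop) _ _)]
  rw [zero_pow two_ne_zero, mul_zero, neg_zero, exp_zero]
  have : 0 ≤ 1 / (2 * a) * exp (-(a * t * L ^ 2)) := by positivity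
  linarith

lemma contDiff_phi (t : ℝ) (n : ℕ) : ContDiff ℝ n (phi t) := by
  unfold phi; fun_prop

lemma phi_pos (t θ : ℝ) : 0 < phi t θ := exp_pos _

lemma hasDerivAt_phi (t θ : ℝ) : HasDerivAt (phi t) (-2 * t * sin θ * phi t θ) θ :=
  (((hasDerivAt_cos θ).const_sub 1).const_mul (-2 * t)).exp.congr_deriv (by unfold phi; ring)

lemma phi_le_exp_neg_mul_sq {t θ : ℝ} (ht : 0 ≤ t) (hθ : |θ| ≤ π) :
    phi t θ ≤ exp (-(2 * (2 / π ^ 2 * t * θ ^ 2))) := by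
  have := cos_le_one_sub_mul_cos_sq hθ
  unfold phi
  gcongr
  nlinarith

def phiMonomial (c : ℝ) (j m b : ℕ) (t θ : ℝ) : ℝ :=
  c * t ^ j * sin θ ^ m * cos θ ^ b * phi t θ

lemma hasDerivAt_phiMonomial (c : ℝ) (j m b : ℕ) (t θ : ℝ) :
    HasDerivAt (phiMonomial c j m b t)
      ((phiMonomial (c * m) j (m - 1) (b + 1) + phiMonomial (-(c * b)) j (m + 1) (b - 1)
        + phiMonomial (-(2 * c)) (j + 1) (m + 1) b) t θ) θ := by
  have := ((((hasDerivAt_sin θ).fun_pow m).fun_mul ((hasDerivAt_cos θ).fun_pow b)).fun_mul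
    (hasDerivAt_phi t θ)).const_mul (c * t ^ j)
  have hfun : phiMonomial c j m b t = fun θ => c * t ^ j * (sin θ ^ m * cos θ ^ b * phi t θ) := by
    ext θ; simp only [phiMonomial]; ring
  rw [hfun]
  refine this.congr_deriv ?_
  -- `m - 1` and `b - 1` are truncated, so the cases `m = 0` and `b = 0` are split off
  rcases m with _ | m <;> rcases b with _ | b <;>
    simp only [phiMonomial, Pi.add_apply] <;> push_cast <;> ring

inductive IsPhiSum (k : ℕ) : (ℝ → ℝ → ℝ) → Prop
  | monomial (c : ℝ) {j m b : ℕ} (hj : 1 ≤ j) (hjm : 2 * j ≤ m + k) :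
      IsPhiSum k (phiMonomial c j m b)
  | add {f g : ℝ → ℝ → ℝ} : IsPhiSum k f → IsPhiSum k g → IsPhiSum k (f + g)

lemma IsPhiSum.exists_hasDerivAt {k : ℕ} {f : ℝ → ℝ → ℝ} (hf : IsPhiSum k f) :
    ∃ g, IsPhiSum (k + 1) g ∧ ∀ t θ, HasDerivAt (f t) (g t θ) θ := by
  induction hf with
  | monomial c hj hjm =>
    exact ⟨_, ((monomial _ hj (by omega)).add (monomial _ hj (by omega))).add
      (monomial _ (by omega) (by omega)), hasDerivAt_phiMonomial c _ _ _⟩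
  | add _ _ ihf ihg =>
    obtain ⟨f', hf', hff'⟩ := ihf
    obtain ⟨g', hg', hgg'⟩ := ihg
    exact ⟨f' + g', hf'.add hg', fun t θ => (hff' t θ).add (hgg' t θ)⟩

lemma isPhiSum_iteratedDeriv_phi (n : ℕ) :
    IsPhiSum (n + 1) fun t => iteratedDeriv (n + 1) (phi t) := by
  induction n with
  | zero =>
    convert IsPhiSum.monomial (k := 1) (-2) (j := 1) (m := 1) (b := 0) le_rfl le_rfl using 1
    ext t θ
    rw [iteratedDeriv_one, (hasDerivAt_phi t θ).deriv, phiMonomial]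
    ring
  | succ n ih =>
    obtain ⟨g, hg, hderiv⟩ := ih.exists_hasDerivAt
    convert hg using 1
    ext t θ
    rw [iteratedDeriv_succ, (hderiv t θ).deriv]

def HasGaussianBound (k : ℕ) (f : ℝ → ℝ → ℝ) : Prop :=
  ∃ C, 0 ≤ C ∧ ∀ t, 0 ≤ t → ∀ θ ∈ Icc 0 π,
    |f t θ| * θ ^ (k - 1) ≤ C * (t * θ * exp (-(2 / π ^ 2 * t * θ ^ 2)))

lemma HasGaussianBound.add {k : ℕ} {f g : ℝ → ℝ → ℝ} (hf : HasGaussianBound k f)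
    (hg : HasGaussianBound k g) : HasGaussianBound k (f + g) := by
  obtain ⟨C, hC, hfC⟩ := hf
  obtain ⟨D, hD, hgD⟩ := hg
  refine ⟨C + D, add_nonneg hC hD, fun t ht θ hθ => ?_⟩
  calc |f t θ + g t θ| * θ ^ (k - 1) ≤ (|f t θ| + |g t θ|) * θ ^ (k - 1) := by
        gcongr
        · exact pow_nonneg hθ.1 _
        · exact abs_add_le _ _
    _ ≤ _ := by rw [add_mul, add_mul]; exact add_le_add (hfC t ht θ hθ) (hgD t ht θ hθ)

lemma hasGaussianBound_phiMonomial (c : ℝ) {j m b k : ℕ} (hj : 1 ≤ j) (hjm : 2 * j ≤ m + k) :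
    HasGaussianBound k (phiMonomial c j m b) := by
  obtain ⟨n, rfl⟩ : ∃ n, j = n + 1 := ⟨j - 1, by omega⟩
  refine ⟨|c| * π ^ (m + (k - 1) - (2 * n + 1)) * (n ! / (2 / π ^ 2) ^ n), by positivity,
    fun t ht θ ⟨hθ₀, hθπ⟩ => ?_⟩
  have hsin : |sin θ| ≤ θ := abs_sin_le_abs.trans_eq (abs_of_nonneg hθ₀)
  have hphi := phi_le_exp_neg_mul_sq ht (abs_le.2 ⟨by linarith [pi_pos], hθπ⟩)
  have hθpow := pow_le_pow_sub_mul_pow hθ₀ hθπ (a := m + (k - 1)) (b := 2 * n + 1) (by omega)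
  calc |phiMonomial c (n + 1) m b t θ| * θ ^ (k - 1)
      = |c| * t ^ (n + 1) * |sin θ| ^ m * |cos θ| ^ b * phi t θ * θ ^ (k - 1) := by
        simp only [phiMonomial, abs_mul, abs_pow, abs_of_nonneg ht, abs_of_pos (phi_pos t θ)]
    _ ≤ |c| * t ^ (n + 1) * θ ^ m * 1 ^ b * exp (-(2 * (2 / π ^ 2 * t * θ ^ 2))) * θ ^ (k - 1) := by
        gcongr
        · exact (phi_pos t θ).le
        · exact abs_cos_le_one θ
    _ = |c| * θ ^ (m + (k - 1)) * (t ^ (n + 1) * exp (-(2 * (2 / π ^ 2 * t * θ ^ 2)))) := by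
        ring
    _ ≤ |c| * (π ^ (m + (k - 1) - (2 * n + 1)) * θ ^ (2 * n + 1))
          * (t ^ (n + 1) * exp (-(2 * (2 / π ^ 2 * t * θ ^ 2)))) := by gcongr
    _ = |c| * π ^ (m + (k - 1) - (2 * n + 1))
          * (t ^ (n + 1) * θ ^ (2 * n + 1) * exp (-(2 * (2 / π ^ 2 * t * θ ^ 2)))) := by ring
    _ ≤ _ := by
        rw [mul_assoc _ (_ / _)]
        exact mul_le_mul_of_nonneg_left (pow_mul_pow_mul_exp_neg_le (by positivity) ht hθ₀ n)
          (by positivity)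

lemma IsPhiSum.hasGaussianBound {k : ℕ} {f : ℝ → ℝ → ℝ} (hf : IsPhiSum k f) :
    HasGaussianBound k f := by
  induction hf with
  | monomial c hj hjm => exact hasGaussianBound_phiMonomial c hj hjm
  | add _ _ ihf ihg => exact ihf.add ihg

/-- Proposition 2.4: the supremum over t > 0 is finite. -/
theorem sup_integral_abs_deriv_phi_lt_top (k : ℕ) (hk : 1 ≤ k) :
    ∃ C : ℝ, ∀ t : ℝ, 0 < t →
      (∫ θ in (0:ℝ)..Real.pi, |iteratedDeriv k (phi t) θ| * θ ^ (k - 1)) ≤ C := by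
  obtain ⟨n, rfl⟩ : ∃ n, k = n + 1 := ⟨k - 1, by omega⟩
  obtain ⟨C, hC, hbound⟩ := (isPhiSum_iteratedDeriv_phi n).hasGaussianBound
  refine ⟨C * (1 / (2 * (2 / π ^ 2))), fun t ht => ?_⟩
  have hcont := (contDiff_phi t (n + 1)).continuous_iteratedDeriv' (n + 1)
  calc (∫ θ in (0:ℝ)..π, |iteratedDeriv (n + 1) (phi t) θ| * θ ^ (n + 1 - 1))
      ≤ ∫ θ in (0:ℝ)..π, C * (t * θ * exp (-(2 / π ^ 2 * t * θ ^ 2))) :=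
        intervalIntegral.integral_mono_on pi_pos.le
          (Continuous.intervalIntegrable (by fun_prop) _ _)
          (Continuous.intervalIntegrable (by fun_prop) _ _)
          fun θ hθ => hbound t ht.le θ hθ
    _ = C * ∫ θ in (0:ℝ)..π, t * θ * exp (-(2 / π ^ 2 * t * θ ^ 2)) :=
        intervalIntegral.integral_const_mul C _
    _ ≤ C * (1 / (2 * (2 / π ^ 2))) := by
        gcongr
        exact intervalIntegral_mul_exp_neg_mul_sq_le (by positivity) t π
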